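/- Let n ≥ 10, C > 0, R₁ > 0 and R₂ ≥ 30·R₁. For x, z ∈ ℝ and y ∈ ℝⁿ define h^{sg}(x,z;y) = (C/n)·[ -(1/2)·yᵀ((1/n²)·I_n + A)y + b_{x,z}ᵀ y ] with b_{x,z} = x·e₁ - (1/2)·z·e_n. Then for every x, z with |x| ≤ R₁ and |z| ≤ R₁, the maximum of h^{sg}(x,z;·) over the hypercube {y ∈ ℝⁿ : ‖y‖_∞ ≤ n·R₂} equals its supremum over all of ℝⁿ, namely (C/(2n))·b_{x,z}ᵀ ((1/n²)·I_n + A)^{-1} b_{x,z}. -/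

import Mathlib

open Matrix

/-- The `n × n` tridiagonal matrix with `A 1 1 = A n n = 1`, diagonal `2` otherwise,
off-diagonal entries `-1`, and all other entries `0` (0-indexed in Lean). -/
noncomputable def triA (n : ℕ) : Matrix (Fin n) (Fin n) ℝ :=
  Matrix.of fun i j =>
    if i = j then (if (i : ℕ) = 0 ∨ (i : ℕ) = n - 1 then 1 else 2)
    else if (i : ℕ) + 1 = (j : ℕ) ∨ (j : ℕ) + 1 = (i : ℕ) then -1 else 0

/-- `b_{x,z} = x·e₁ - (1/2)·z·eₙ`. -/
noncomputable def bvec (n : ℕ) (x z : ℝ) : Fin n → ℝ := fun i =>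
  if (i : ℕ) = 0 then x else if (i : ℕ) = n - 1 then -(1 / 2) * z else 0

/-- `h^{sg}(x, z; y) = (C/n)·[-(1/2)·yᵀ((1/n²)I + A)y + b_{x,z}ᵀ y]`. -/
noncomputable def hsg (n : ℕ) (C x z : ℝ) (y : Fin n → ℝ) : ℝ :=
  (C / n) * (-(1 / 2) * (y ⬝ᵥ ((((n : ℝ) ^ 2)⁻¹ • (1 : Matrix (Fin n) (Fin n) ℝ)
      + triA n).mulVec y)) + bvec n x z ⬝ᵥ y)

/-!
The maximiser of the concave quadratic `h^{sg}(x, z; ·)` over all of `ℝⁿ` is `y* = M⁻¹ b` with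
`M = n⁻² I + A`, with value `(C / 2n) bᵀ M⁻¹ b`; what has to be shown is that `y*` lies in the
cube. Since `A` is the Laplacian of the path, `yᵀ A y = ∑ₖ (yₖ₊₁ - yₖ)²`. Comparing `yᵢ` with the
smallest coordinate of `y` and chaining along the path (Cauchy–Schwarz) gives `yᵢ² ≤ 2n · yᵀ M y`
for every `y`. For `y = y*` the energy `y*ᵀ M y* = bᵀ y*` is at most `(|x| + |z|/2) ‖y*‖_∞`, so
`‖y*‖_∞ ≤ n (2|x| + |z|) ≤ 3 n R₁`.
-/

open Finset

section QuadraticMaximum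

variable {ι : Type*} [Fintype ι] [DecidableEq ι] {M : Matrix ι ι ℝ}

lemma Matrix.PosDef.mulVec_inv_mulVec (hM : M.PosDef) (b : ι → ℝ) : M *ᵥ (M⁻¹ *ᵥ b) = b := by
  rw [mulVec_mulVec, mul_nonsing_inv _ ((isUnit_iff_isUnit_det M).mp hM.isUnit), one_mulVec]

lemma Matrix.PosDef.neg_half_dotProduct_mulVec_add_le (hM : M.PosDef) (b y : ι → ℝ) :
    -(1 / 2) * (y ⬝ᵥ M *ᵥ y) + b ⬝ᵥ y ≤ (1 / 2) * (b ⬝ᵥ M⁻¹ *ᵥ b) := by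
  set ystar := M⁻¹ *ᵥ b
  have hMy : M *ᵥ ystar = b := hM.mulVec_inv_mulVec b
  have hMT : Mᵀ = M := by rw [← conjTranspose_eq_transpose_of_trivial, hM.isHermitian.eq]
  have hsymm : ystar ⬝ᵥ M *ᵥ y = b ⬝ᵥ y := by
    rw [dotProduct_mulVec, ← mulVec_transpose, hMT, hMy]
  have hdev := hM.posSemidef.dotProduct_mulVec_nonneg (y - ystar)
  rw [star_trivial, mulVec_sub, dotProduct_sub, sub_dotProduct, sub_dotProduct, hsymm, hMy,
    dotProduct_comm y b, dotProduct_comm ystar b] at hdev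
  linarith

lemma Matrix.PosDef.neg_half_dotProduct_mulVec_add_inv_mulVec (hM : M.PosDef) (b : ι → ℝ) :
    -(1 / 2) * (M⁻¹ *ᵥ b ⬝ᵥ M *ᵥ (M⁻¹ *ᵥ b)) + b ⬝ᵥ M⁻¹ *ᵥ b = (1 / 2) * (b ⬝ᵥ M⁻¹ *ᵥ b) := by
  rw [hM.mulVec_inv_mulVec, dotProduct_comm]
  ring

end QuadraticMaximum

section Path

variable {m : ℕ}

lemma sum_sum_adjacent_mul (y : Fin (m + 1) → ℝ) :
    ∑ i : Fin (m + 1), ∑ j : Fin (m + 1), (if (i : ℕ) + 1 = j then y i * y j else 0) =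
      ∑ k : Fin m, y k.castSucc * y k.succ := by
  have hsucc (k : Fin m) (j : Fin (m + 1)) : (k.castSucc : ℕ) + 1 = j ↔ k.succ = j := by
    simp [Fin.ext_iff]
  have hlast (j : Fin (m + 1)) : ¬ (Fin.last m : ℕ) + 1 = j := by
    simp only [Fin.val_last]; omega
  rw [Fin.sum_univ_castSucc]
  simp only [hsucc, hlast, if_false, sum_const_zero, add_zero, sum_ite_eq, mem_univ, if_true]

open Fin.NatCast in
lemma abs_sub_le_sum_abs_sub_succ (y : Fin (m + 1) → ℝ) (i j : Fin (m + 1)) :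
    |y i - y j| ≤ ∑ k : Fin m, |y k.succ - y k.castSucc| := by
  wlog hij : i ≤ j generalizing i j
  · rw [abs_sub_comm]
    exact this j i (le_of_not_ge hij)
  have hchain := dist_le_Ico_sum_dist (fun k : ℕ => y k) (Fin.le_iff_val_le_val.mp hij)
  simp only [Fin.cast_val_eq_self, Real.dist_eq] at hchain
  have hsub : Ico (i : ℕ) j ⊆ range m := by
    intro k
    simp only [mem_Ico, mem_range]
    omega
  have hcast (k : Fin m) :
      ((k : ℕ) : Fin (m + 1)) = k.castSucc ∧ ((k + 1 : ℕ) : Fin (m + 1)) = k.succ := by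
    constructor <;> ext <;> simp
  calc |y i - y j| ≤ ∑ k ∈ Ico (i : ℕ) j, |y k - y (k + 1 : ℕ)| := hchain
    _ ≤ ∑ k ∈ range m, |y k - y (k + 1 : ℕ)| :=
        sum_le_sum_of_subset_of_nonneg hsub fun _ _ _ => abs_nonneg _
    _ = ∑ k : Fin m, |y k.succ - y k.castSucc| := by
        rw [← Fin.sum_univ_eq_sum_range (fun k => |y k - y (k + 1 : ℕ)|)]
        exact sum_congr rfl fun k _ => by rw [(hcast k).1, (hcast k).2, abs_sub_comm]

lemma sq_le_two_mul_sum_sq_add_sum_sq_sub_succ (y : Fin (m + 1) → ℝ) (i : Fin (m + 1)) :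
    y i ^ 2 ≤
      2 * ((∑ j, y j ^ 2) / (m + 1) + m * ∑ k : Fin m, (y k.succ - y k.castSucc) ^ 2) := by
  obtain ⟨j, hj⟩ := Finite.exists_min fun j => y j ^ 2
  have hmin : y j ^ 2 ≤ (∑ j, y j ^ 2) / (m + 1) := by
    have hcard := card_nsmul_le_sum univ (fun j => y j ^ 2) (y j ^ 2) fun k _ => hj k
    rw [card_univ, Fintype.card_fin, nsmul_eq_mul] at hcard
    push_cast at hcard
    rw [le_div_iff₀ (by positivity)]
    linarith
  set T := ∑ k : Fin m, |y k.succ - y k.castSucc|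
  have hT : T ^ 2 ≤ m * ∑ k : Fin m, (y k.succ - y k.castSucc) ^ 2 := by
    simpa only [card_univ, Fintype.card_fin, sq_abs] using
      sq_sum_le_card_mul_sum_sq (s := univ) (f := fun k : Fin m => |y k.succ - y k.castSucc|)
  have hchain : |y i| ≤ |y j| + T := by
    have := abs_sub_le_sum_abs_sub_succ y i j
    have := abs_sub_abs_le_abs_sub (y i) (y j)
    linarith
  calc y i ^ 2 = |y i| ^ 2 := (sq_abs _).symm
    _ ≤ (|y j| + T) ^ 2 := by gcongr
    _ ≤ 2 * (y j ^ 2 + T ^ 2) := by nlinarith [sq_abs (y j), sq_nonneg (|y j| - T)]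
    _ ≤ _ := by gcongr

end Path

section TriA

variable {m : ℕ}

lemma triA_succ_apply (hm : m ≠ 0) (i j : Fin (m + 1)) :
    triA (m + 1) i j =
      (if i = j then (if i = 0 then 0 else 1) + (if i = Fin.last m then 0 else 1) else 0)
        - (if (i : ℕ) + 1 = j then 1 else 0) - (if (j : ℕ) + 1 = i then 1 else 0) := by
  simp only [triA, of_apply, Fin.ext_iff, Fin.val_zero, Fin.val_last, Nat.add_sub_cancel]
  split_ifs <;> (try norm_num) <;> omega

lemma dotProduct_triA_mulVec (hm : m ≠ 0) (y : Fin (m + 1) → ℝ) :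
    y ⬝ᵥ triA (m + 1) *ᵥ y = ∑ k : Fin m, (y k.succ - y k.castSucc) ^ 2 := by
  have hdiag : ∑ i : Fin (m + 1),
      ((if i = 0 then 0 else 1) + (if i = Fin.last m then 0 else 1)) * y i ^ 2 =
      ∑ k : Fin m, y k.succ ^ 2 + ∑ k : Fin m, y k.castSucc ^ 2 := by
    simp only [add_mul, sum_add_distrib, ite_mul, zero_mul, one_mul]
    rw [Fin.sum_univ_succ, Fin.sum_univ_castSucc (f := fun i => if i = Fin.last m then _ else _)]
    simp [Fin.succ_ne_zero, Fin.castSucc_ne_last]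
  have hlower : ∑ i : Fin (m + 1), ∑ j : Fin (m + 1),
      (if (j : ℕ) + 1 = i then y i * y j else 0) = ∑ k : Fin m, y k.castSucc * y k.succ := by
    rw [sum_comm, ← sum_sum_adjacent_mul]
    simp only [mul_comm]
  calc y ⬝ᵥ triA (m + 1) *ᵥ y
      = ∑ i : Fin (m + 1), ∑ j : Fin (m + 1), triA (m + 1) i j * (y i * y j) := by
        simp only [dotProduct, mulVec, mul_sum]
        congr! 2
        ring
    _ = ∑ k : Fin m, y k.succ ^ 2 + ∑ k : Fin m, y k.castSucc ^ 2
          - 2 * ∑ k : Fin m, y k.castSucc * y k.succ := by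
        simp only [triA_succ_apply hm, sub_mul, ite_mul, zero_mul, one_mul, sum_sub_distrib,
          sum_ite_eq, mem_univ, if_true, sum_sum_adjacent_mul, hlower, ← hdiag]
        simp only [← pow_two]
        ring
    _ = ∑ k : Fin m, (y k.succ - y k.castSucc) ^ 2 := by
        rw [mul_sum, ← sum_add_distrib, ← sum_sub_distrib]
        exact sum_congr rfl fun k _ => by ring

lemma triA_transpose (n : ℕ) : (triA n)ᵀ = triA n := by
  ext i j
  rcases eq_or_ne i j with rfl | hij
  · rfl
  · simp only [transpose_apply, triA, of_apply, hij, hij.symm, if_false, or_comm]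

lemma posSemidef_triA (hm : m ≠ 0) : (triA (m + 1)).PosSemidef := by
  refine posSemidef_iff_dotProduct_mulVec.mpr ⟨?_, fun y => ?_⟩
  · rw [IsHermitian, conjTranspose_eq_transpose_of_trivial, triA_transpose]
  · rw [star_trivial, dotProduct_triA_mulVec hm]
    positivity

noncomputable def regTriA (n : ℕ) : Matrix (Fin n) (Fin n) ℝ :=
  ((n : ℝ) ^ 2)⁻¹ • (1 : Matrix (Fin n) (Fin n) ℝ) + triA n

lemma posDef_regTriA (hm : m ≠ 0) : (regTriA (m + 1)).PosDef :=
  (PosDef.one.smul (by positivity)).add_posSemidef (posSemidef_triA hm)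

lemma sq_le_two_mul_dotProduct_regTriA_mulVec (hm : m ≠ 0) (y : Fin (m + 1) → ℝ)
    (i : Fin (m + 1)) : y i ^ 2 ≤ 2 * (m + 1) * (y ⬝ᵥ regTriA (m + 1) *ᵥ y) := by
  have hquad : y ⬝ᵥ regTriA (m + 1) *ᵥ y =
      (∑ j, y j ^ 2) / (m + 1) ^ 2 + ∑ k : Fin m, (y k.succ - y k.castSucc) ^ 2 := by
    rw [regTriA, add_mulVec, smul_mulVec, one_mulVec, dotProduct_add, dotProduct_smul,
      dotProduct_triA_mulVec hm, smul_eq_mul, dotProduct]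
    push_cast
    simp only [sq, div_eq_inv_mul, mul_sum]
  have hQ : 0 ≤ ∑ k : Fin m, (y k.succ - y k.castSucc) ^ 2 := by positivity
  calc y i ^ 2
      ≤ 2 * ((∑ j, y j ^ 2) / (m + 1) + m * ∑ k : Fin m, (y k.succ - y k.castSucc) ^ 2) :=
        sq_le_two_mul_sum_sq_add_sum_sq_sub_succ y i
    _ ≤ 2 * (m + 1) * (y ⬝ᵥ regTriA (m + 1) *ᵥ y) := by
        rw [hquad]
        field_simp
        nlinarith

lemma bvec_dotProduct (hm : m ≠ 0) (x z : ℝ) (y : Fin (m + 1) → ℝ) :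
    bvec (m + 1) x z ⬝ᵥ y = x * y 0 - (1 / 2) * z * y (Fin.last m) := by
  have hb : bvec (m + 1) x z = Pi.single 0 x + Pi.single (Fin.last m) (-(1 / 2) * z) := by
    ext i
    simp only [bvec, Pi.add_apply, Pi.single_apply, Fin.ext_iff, Fin.val_zero, Fin.val_last,
      Nat.add_sub_cancel]
    split_ifs <;> first | omega | simp
  rw [hb, add_dotProduct, single_dotProduct, single_dotProduct]
  ring

lemma abs_regTriA_inv_mulVec_bvec_le (hm : m ≠ 0) (x z : ℝ) (i : Fin (m + 1)) :
    |((regTriA (m + 1))⁻¹ *ᵥ bvec (m + 1) x z) i| ≤ (m + 1) * (2 * |x| + |z|) := by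
  set y := (regTriA (m + 1))⁻¹ *ᵥ bvec (m + 1) x z
  obtain ⟨i₀, hi₀⟩ := Finite.exists_max fun i => |y i|
  have henergy : y ⬝ᵥ regTriA (m + 1) *ᵥ y ≤ (|x| + |z| / 2) * |y i₀| := by
    rw [(posDef_regTriA hm).mulVec_inv_mulVec, dotProduct_comm, bvec_dotProduct hm]
    have hfirst : x * y 0 ≤ |x| * |y i₀| :=
      calc x * y 0 ≤ |x| * |y 0| := (le_abs_self _).trans (abs_mul _ _).le
        _ ≤ |x| * |y i₀| := mul_le_mul_of_nonneg_left (hi₀ 0) (abs_nonneg x)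
    have hlast : -(z * y (Fin.last m)) ≤ |z| * |y i₀| :=
      calc -(z * y (Fin.last m)) ≤ |z| * |y (Fin.last m)| :=
          (neg_le_abs _).trans (abs_mul _ _).le
        _ ≤ |z| * |y i₀| := mul_le_mul_of_nonneg_left (hi₀ _) (abs_nonneg z)
    linarith
  have hsq : |y i₀| ^ 2 ≤ (m + 1) * (2 * |x| + |z|) * |y i₀| :=
    calc |y i₀| ^ 2 = y i₀ ^ 2 := sq_abs _
      _ ≤ 2 * (m + 1) * (y ⬝ᵥ regTriA (m + 1) *ᵥ y) :=
          sq_le_two_mul_dotProduct_regTriA_mulVec hm y i₀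
      _ ≤ 2 * (m + 1) * ((|x| + |z| / 2) * |y i₀|) := by gcongr
      _ = (m + 1) * (2 * |x| + |z|) * |y i₀| := by ring
  have hmax : |y i₀| ≤ (m + 1) * (2 * |x| + |z|) := by
    have hc : 0 ≤ (m + 1 : ℝ) * (2 * |x| + |z|) := by positivity
    nlinarith
  exact (hi₀ i).trans hmax

end TriA

lemma hsg_eq (n : ℕ) (C x z : ℝ) (y : Fin n → ℝ) :
    hsg n C x z y = C / n * (-(1 / 2) * (y ⬝ᵥ regTriA n *ᵥ y) + bvec n x z ⬝ᵥ y) :=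
  rfl

theorem stmt_11 (n : ℕ) (hn : 10 ≤ n) (C R1 R2 : ℝ) (hC : 0 < C)
    (hR2 : 30 * R1 ≤ R2)
    (x z : ℝ) (hx : |x| ≤ R1) (hz : |z| ≤ R1) :
    ∃ ystar : Fin n → ℝ,
      (∀ i : Fin n, |ystar i| ≤ (n : ℝ) * R2) ∧
      (∀ y : Fin n → ℝ, hsg n C x z y ≤ hsg n C x z ystar) ∧
      hsg n C x z ystar =
        (C / (2 * n)) * (bvec n x z ⬝ᵥ
          ((((n : ℝ) ^ 2)⁻¹ • (1 : Matrix (Fin n) (Fin n) ℝ) + triA n)⁻¹).mulVec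
            (bvec n x z)) := by
  obtain ⟨m, rfl⟩ : ∃ m, n = m + 1 := ⟨n - 1, by omega⟩
  have hm : m ≠ 0 := by omega
  have hM := posDef_regTriA hm
  have hvalue := hM.neg_half_dotProduct_mulVec_add_inv_mulVec (bvec (m + 1) x z)
  refine ⟨(regTriA (m + 1))⁻¹ *ᵥ bvec (m + 1) x z, fun i => ?_, fun y => ?_, ?_⟩
  · calc _ ≤ (m + 1) * (2 * |x| + |z|) := abs_regTriA_inv_mulVec_bvec_le hm x z i
      _ ≤ ((m + 1 : ℕ) : ℝ) * R2 := by
        push_cast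
        nlinarith [abs_nonneg x, abs_nonneg z]
  · rw [hsg_eq, hsg_eq, hvalue]
    exact mul_le_mul_of_nonneg_left (hM.neg_half_dotProduct_mulVec_add_le _ y) (by positivity)
  · rw [hsg_eq, hvalue]
    change _ = C / (2 * _) * (_ ⬝ᵥ (regTriA (m + 1))⁻¹ *ᵥ _)
    ring
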